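/- arXiv:1503.00885 — 4 statements merged into one kernel-verified Lean document; each statement's English description precedes it below -/
import Mathlib

section
/- For any partition λ of n, the potential energy satisfies U(B(λ)) ≤ U(λ), where B is the Bulgarian solitaire operator. -/
/-- A partition of `n`: a multiset of positive integers summing to `n`
(multisets model nonincreasing sequences, since order is irrelevant). -/

def IsPartition (n : ℕ) (l : Multiset ℕ) : Prop :=
  l.sum = n ∧ ∀ x ∈ l, 0 < x

/-- The Bulgarian solitaire move: remove one card from each pile, discard empty
piles, and add a new pile whose size is the number of old piles. -/

def bulg (l : Multiset ℕ) : Multiset ℕ :=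
  (Multiset.card l ::ₘ l.map (· - 1)).filter (0 < ·)

/-- The staircase partition `(k, k-1, …, 2, 1)`. -/

def staircase (k : ℕ) : Multiset ℕ := (Multiset.range k).map (· + 1)

/-- Potential energy `U(λ) = Σ (i + j)` over the cells of the Young diagram,
the rows taken in nonincreasing order. -/

def energy (l : Multiset ℕ) : ℕ :=
  ((l.sort (· ≥ ·)).zipIdx.map fun p => ∑ j ∈ Finset.range p.1, ((p.2 + 1) + (j + 1))).sum

/-!
Extend the energy to arbitrary lists of rows, read top to bottom. If `s` is the sorted
partition, the new row `length s` created by the move is the old first column laid down as a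
row; since the weight `i + j` is symmetric, the list `length s :: map (· - 1) s` has the same
energy as `s`. Deleting the rows of length zero moves the rows below them up, which can only
lower the energy, and sorting the remaining rows into nonincreasing order lowers it further by
an exchange argument.
-/

/-- Rows are indexed from `0`, so cell `(i + 1, j + 1)` of the diagram is cell `j` of row `i`. -/
def rowEnergy (i a : ℕ) : ℕ := ∑ j ∈ Finset.range a, ((i + 1) + (j + 1))

def rowsEnergy : ℕ → List ℕ → ℕ
  | _, [] => 0
  | i, a :: t => rowEnergy i a + rowsEnergy (i + 1) t

@[simp]
lemma rowsEnergy_nil (i : ℕ) : rowsEnergy i [] = 0 := rfl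

@[simp]
lemma rowsEnergy_cons (i a : ℕ) (t : List ℕ) :
    rowsEnergy i (a :: t) = rowEnergy i a + rowsEnergy (i + 1) t := rfl

@[simp]
lemma rowEnergy_zero (i : ℕ) : rowEnergy i 0 = 0 := rfl

lemma rowEnergy_succ (i a : ℕ) : rowEnergy i (a + 1) = (i + 2) + rowEnergy (i + 1) a := by
  simp only [rowEnergy, Finset.sum_range_succ']
  rw [add_comm]
  congr 1
  refine Finset.sum_congr rfl fun j _ => ?_
  omega

lemma rowEnergy_add (i m a : ℕ) : rowEnergy (i + m) a = rowEnergy i a + m * a := by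
  induction a generalizing i with
  | zero => simp
  | succ a ih =>
    rw [rowEnergy_succ, rowEnergy_succ, Nat.add_right_comm i m 1, ih]
    ring

lemma rowsEnergy_succ (i : ℕ) (L : List ℕ) : rowsEnergy (i + 1) L = rowsEnergy i L + L.sum := by
  induction L generalizing i with
  | nil => simp
  | cons a t ih =>
    simp only [rowsEnergy_cons, ih, List.sum_cons, rowEnergy_add]
    ring

lemma rowsEnergy_append (i : ℕ) (A B : List ℕ) :
    rowsEnergy i (A ++ B) = rowsEnergy i A + rowsEnergy (i + A.length) B := by
  induction A generalizing i with
  | nil => simp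
  | cons a t ih =>
    rw [List.cons_append, rowsEnergy_cons, rowsEnergy_cons, ih, List.length_cons,
      Nat.add_right_comm i 1, Nat.add_assoc i t.length, Nat.add_assoc (rowEnergy i a)]

lemma rowsEnergy_cons_append_le {b : ℕ} {P : List ℕ} (hP : ∀ x ∈ P, x ≤ b)
    (i : ℕ) (Q : List ℕ) :
    rowsEnergy i (b :: (P ++ Q)) ≤ rowsEnergy i (P ++ b :: Q) := by
  have hsum : P.sum ≤ P.length * b := by simpa using List.sum_le_card_nsmul P b hP
  rw [rowsEnergy_cons, rowsEnergy_append, rowsEnergy_append, rowsEnergy_cons, rowsEnergy_succ,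
    rowEnergy_add, Nat.add_right_comm i 1]
  omega

lemma rowsEnergy_le_of_perm_of_sorted {L L' : List ℕ} (hperm : L.Perm L')
    (hsorted : L'.Pairwise (· ≥ ·)) (i : ℕ) : rowsEnergy i L' ≤ rowsEnergy i L := by
  induction L' generalizing L i with
  | nil => rw [List.perm_nil.mp hperm]
  | cons b T ih =>
    obtain ⟨P, Q, rfl⟩ := List.append_of_mem (hperm.mem_iff.mpr List.mem_cons_self)
    have hT : (P ++ Q).Perm T := (List.perm_middle.symm.trans hperm).cons_inv
    have hbmax : ∀ x ∈ P, x ≤ b := fun x hx =>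
      (List.mem_cons.mp (hperm.subset (by simp [hx]))).elim le_of_eq
        (List.rel_of_pairwise_cons hsorted)
    calc rowsEnergy i (b :: T) ≤ rowsEnergy i (b :: (P ++ Q)) := by
          simpa using ih hT (List.pairwise_cons.mp hsorted).2 (i + 1)
      _ ≤ rowsEnergy i (P ++ b :: Q) := rowsEnergy_cons_append_le hbmax i Q

lemma rowsEnergy_filter_pos_le (i : ℕ) (L : List ℕ) :
    rowsEnergy i (L.filter (0 < ·)) ≤ rowsEnergy i L := by
  induction L generalizing i with
  | nil => simp
  | cons a t ih =>
    rcases Nat.eq_zero_or_pos a with rfl | ha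
    · have := ih i
      rw [List.filter_cons_of_neg (by simp), rowsEnergy_cons, rowEnergy_zero, rowsEnergy_succ]
      omega
    · rw [List.filter_cons_of_pos (by simpa using ha), rowsEnergy_cons, rowsEnergy_cons]
      exact Nat.add_le_add_left (ih (i + 1)) _

lemma rowsEnergy_length_cons_map_pred (i : ℕ) {s : List ℕ} (hs : ∀ x ∈ s, 0 < x) :
    rowsEnergy i (s.length :: s.map (· - 1)) = rowsEnergy i s := by
  induction s generalizing i with
  | nil => simp
  | cons a t ih =>
    obtain ⟨a, rfl⟩ := Nat.exists_eq_add_of_lt (hs _ List.mem_cons_self)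
    have ht := ih (i + 1) fun x hx => hs x (List.mem_cons_of_mem _ hx)
    simp only [rowsEnergy_cons, List.length_cons, List.map_cons, rowEnergy_succ, zero_add,
      Nat.add_sub_cancel] at ht ⊢
    omega

lemma sum_map_zipIdx_eq_rowsEnergy (i : ℕ) (L : List ℕ) :
    ((L.zipIdx i).map fun p => ∑ j ∈ Finset.range p.1, ((p.2 + 1) + (j + 1))).sum
      = rowsEnergy i L := by
  induction L generalizing i with
  | nil => rfl
  | cons a t ih => rw [List.zipIdx_cons, List.map_cons, List.sum_cons, ih]; rfl

lemma energy_eq_rowsEnergy_sort (m : Multiset ℕ) : energy m = rowsEnergy 0 (m.sort (· ≥ ·)) :=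
  sum_map_zipIdx_eq_rowsEnergy 0 _

lemma energy_coe_le_rowsEnergy (L : List ℕ) : energy L ≤ rowsEnergy 0 L :=
  (energy_eq_rowsEnergy_sort L).trans_le <| rowsEnergy_le_of_perm_of_sorted
    (Multiset.coe_eq_coe.mp (Multiset.sort_eq _ _)).symm (Multiset.pairwise_sort _ _) 0

lemma bulg_coe (s : List ℕ) : bulg s = ↑((s.length :: s.map (· - 1)).filter (0 < ·)) := by
  simp [bulg, Multiset.filter_coe]

/-- The Bulgarian solitaire move never increases the potential energy. -/
theorem bulg_energy_le (n : ℕ) (l : Multiset ℕ) (hl : IsPartition n l) :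
    energy (bulg l) ≤ energy l := by
  set s := l.sort (· ≥ ·)
  have hsl : (s : Multiset ℕ) = l := Multiset.sort_eq _ _
  have hpos : ∀ x ∈ s, 0 < x := fun x hx => hl.2 x (hsl ▸ Multiset.mem_coe.mpr hx)
  calc energy (bulg l) ≤ rowsEnergy 0 ((s.length :: s.map (· - 1)).filter (0 < ·)) := by
        rw [← hsl, bulg_coe]
        exact energy_coe_le_rowsEnergy _
    _ ≤ rowsEnergy 0 (s.length :: s.map (· - 1)) := rowsEnergy_filter_pos_le 0 _
    _ = rowsEnergy 0 s := rowsEnergy_length_cons_map_pred 0 hpos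
    _ = energy l := (energy_eq_rowsEnergy_sort l).symm
end

section
/- If n is not a triangular number, then the Bulgarian solitaire operator B has no fixed point among the partitions of n. -/
theorem count_bulg_of_pos (l : Multiset ℕ) {j : ℕ} (hj : 0 < j) :
    (bulg l).count j = (if j = Multiset.card l then 1 else 0) + l.count (j + 1) := by
  have hpred : l.filter (fun a => j = a - 1) = l.filter (fun a => j + 1 = a) :=
    Multiset.filter_congr fun a _ => by omega
  rw [bulg, Multiset.count_filter, if_pos hj, Multiset.count_cons, Multiset.count_map, hpred,
    ← Multiset.count_eq_card_filter_eq, add_comm]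

theorem eq_ite_le_of_recurrence {f : ℕ → ℕ} {c N : ℕ} (hcN : c ≤ N)
    (hstep : ∀ j, 0 < j → f j = (if j = c then 1 else 0) + f (j + 1))
    (hvanish : ∀ j, N < j → f j = 0) {j : ℕ} (hj : 0 < j) :
    f j = if j ≤ c then 1 else 0 := by
  suffices ∀ d j, 0 < j → N < j + d → f j = if j ≤ c then 1 else 0 from
    this (N + 1) j hj (by omega)
  intro d
  induction d with
  | zero =>
    intro j _ hNj
    rw [hvanish j hNj, if_neg (by omega)]
  | succ d ih =>
    intro j hj hNj
    rw [hstep j hj, ih (j + 1) (by omega) (by omega)]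
    split_ifs <;> omega

theorem count_staircase (k j : ℕ) :
    (staircase k).count j = if 0 < j ∧ j ≤ k then 1 else 0 := by
  have hnodup : (staircase k).Nodup :=
    (Multiset.nodup_range k).map fun _ _ => Nat.succ.inj
  have hmem : j ∈ staircase k ↔ 0 < j ∧ j ≤ k := by
    simp only [staircase, Multiset.mem_map, Multiset.mem_range]
    constructor
    · rintro ⟨i, hi, rfl⟩
      omega
    · rintro ⟨hj, hjk⟩
      exact ⟨j - 1, by omega, by omega⟩
  rw [Multiset.count_eq_of_nodup hnodup]
  exact if_congr hmem rfl rfl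

theorem sum_staircase (k : ℕ) : (staircase k).sum = k * (k + 1) / 2 := by
  have hshift : ∑ i ∈ Finset.range (k + 1), i = ∑ i ∈ Finset.range k, (i + 1) := by
    rw [Finset.sum_range_succ', add_zero]
  calc (staircase k).sum = ∑ i ∈ Finset.range k, (i + 1) := rfl
    _ = k * (k + 1) / 2 := by rw [← hshift, Finset.sum_range_id, Nat.add_sub_cancel, mul_comm]

theorem eq_staircase_of_bulg_eq {l : Multiset ℕ} (hpos : ∀ x ∈ l, 0 < x) (h : bulg l = l) :
    l = staircase (Multiset.card l) := by
  have hcard : Multiset.card l ≤ l.sum := by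
    simpa using Multiset.card_nsmul_le_sum (fun x hx => hpos x hx)
  have hvanish : ∀ j, l.sum < j → l.count j = 0 := fun j hj =>
    Multiset.count_eq_zero.2 fun hmem =>
      absurd (Multiset.le_sum_of_mem hmem) (by omega)
  ext j
  rw [count_staircase]
  rcases Nat.eq_zero_or_pos j with rfl | hj
  · exact Multiset.count_eq_zero.2 fun hmem => absurd (hpos 0 hmem) (lt_irrefl 0)
  · have hstep (j : ℕ) (hj : 0 < j) :
        l.count j = (if j = Multiset.card l then 1 else 0) + l.count (j + 1) := by
      rw [← count_bulg_of_pos l hj, h]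
    rw [eq_ite_le_of_recurrence (f := l.count) hcard hstep hvanish hj]
    exact if_congr (and_iff_right hj).symm rfl rfl

/-- If n is not a triangular number, the Bulgarian solitaire operator has no
fixed point among the partitions of n. -/
theorem bulg_no_fixed_point (n : ℕ) (hn : ¬ ∃ k : ℕ, n = k * (k + 1) / 2)
    (l : Multiset ℕ) (hl : IsPartition n l) :
    bulg l ≠ l := by
  intro h
  obtain ⟨hsum, hpos⟩ := hl
  refine hn ⟨Multiset.card l, ?_⟩
  calc n = l.sum := hsum.symm
    _ = (staircase (Multiset.card l)).sum := congrArg Multiset.sum (eq_staircase_of_bulg_eq hpos h)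
    _ = _ := sum_staircase _
end

section
/- Let n = k(k+1)/2 and τ = (k-1, k-1, k-2, ..., 2, 1, 1). Then for each i with 0 ≤ i ≤ k(k-1) - 1, the partition B^{k(k-1)-i-1}(τ) is the conjugate (transpose) of the partition B^i(τ). -/
/-- Toom's partition τ = (k-1, k-1, k-2, …, 2, 1, 1) of n = k(k+1)/2. -/
def tau (k : ℕ) : Multiset ℕ := (k - 1) ::ₘ 1 ::ₘ staircase (k - 1)

/-- The conjugate (transpose) partition: its j-th part is the number of parts
that are ≥ j. -/
def conj (l : Multiset ℕ) : Multiset ℕ :=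
  (Multiset.range l.sup).map fun j => Multiset.card (l.filter (j < ·))

/-!
Write σ(a, b) for the staircase with rows 0, 1, …, k after one cell has been moved from row a
to row b. A Bulgarian solitaire move shortens every row by one and adds a new row, as long as
the number of nonempty rows, which takes the place of row k; so it sends σ(a, b) to
σ(a - 1, b - 1), where a cycles through 1, …, k and b through 0, …, k. Since τ = σ(k, 0),
we get B^i(τ) = σ(a_i, b_i) with a_i ≡ -i (mod k) and b_i ≡ -i (mod k + 1), as long as
a_i ≠ b_i; by the Chinese remainder theorem this holds for i < k². Counting the parts that
exceed t shows that the conjugate of σ(a, b) is σ(k + 1 - a, k - b), and for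
i + j + 1 = k(k - 1) the same congruences give a_j = k + 1 - a_i and b_j = k - b_i.
-/

open Multiset

namespace Multiset

theorem range_succ_eq_cons_map (n : ℕ) :
    range (n + 1) = 0 ::ₘ (range n).map (· + 1) := by
  rw [← coe_range, List.range_succ_eq_map, ← cons_coe]
  rfl

theorem map_range_reflect (n : ℕ) : (range n).map (n - 1 - ·) = range n := by
  have h := List.reverse_range' (s := 0) (n := n)
  rw [zero_add, ← List.range_eq_range'] at h
  rw [← coe_range, map_coe, ← h, coe_reverse]

end Multiset

theorem Nat.mod_add_mod_add_one_of_dvd {n x y : ℕ} (h : n ∣ x + y + 1) :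
    x % n + y % n + 1 = n := by
  have hn : n ≠ 0 := by rintro rfl; simp at h
  have hx := Nat.mod_lt x (Nat.pos_of_ne_zero hn)
  have hy := Nat.mod_lt y (Nat.pos_of_ne_zero hn)
  refine Nat.eq_of_dvd_of_lt_two_mul (by omega) ?_ (by omega)
  exact ((((Nat.mod_modEq x n).add (Nat.mod_modEq y n)).add_right 1).dvd_iff dvd_rfl).2 h

theorem Nat.add_one_mod_eq_ite {n : ℕ} (hn : 0 < n) (x : ℕ) :
    (x + 1) % n = if x % n + 1 = n then 0 else x % n + 1 := by
  rw [← Nat.mod_add_mod]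
  split_ifs with h
  · rw [h, Nat.mod_self]
  · exact Nat.mod_eq_of_lt (by have := Nat.mod_lt x hn; omega)

theorem filter_pos_map_sub_one_filter_pos (s : Multiset ℕ) :
    ((s.filter (0 < ·)).map (· - 1)).filter (0 < ·) = (s.map (· - 1)).filter (0 < ·) := by
  simp only [filter_map, filter_filter]
  congr 1
  exact filter_congr fun x _ => by simp only [Function.comp_apply]; omega

theorem bulg_filter_pos (s : Multiset ℕ) :
    bulg (s.filter (0 < ·)) = (card (s.filter (0 < ·)) ::ₘ s.map (· - 1)).filter (0 < ·) := by
  rw [bulg, filter_cons, filter_cons, filter_pos_map_sub_one_filter_pos]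

theorem card_filter_lt_pos_iff (l : Multiset ℕ) (t : ℕ) :
    0 < card (l.filter (t < ·)) ↔ t < l.sup := by
  rw [pos_iff_ne_zero, Ne, card_eq_zero, filter_eq_nil, ← not_le, Multiset.sup_le]
  simp only [not_lt]

theorem conj_eq_filter_pos_map_range {l : Multiset ℕ} {N : ℕ} (hN : l.sup ≤ N) :
    conj l = ((range N).map fun t => card (l.filter (t < ·))).filter (0 < ·) := by
  rw [conj, filter_map]
  congr 1
  refine ((nodup_range _).ext ((nodup_range _).filter _)).2 fun t => ?_
  simp only [mem_filter, mem_range, Function.comp_apply, card_filter_lt_pos_iff]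
  omega

-- Row `j` of the staircase `(0, 1, …, k)` after moving a cell from row `a` to row `b`.
def movedRow (a b j : ℕ) : ℕ := j + (if j = b then 1 else 0) - (if j = a then 1 else 0)

def movedStaircase (k a b : ℕ) : Multiset ℕ :=
  ((range (k + 1)).map (movedRow a b)).filter (0 < ·)

theorem card_filter_lt_map_movedRow {k a b t : ℕ} (ha : 1 ≤ a) (hak : a ≤ k) (hb : b ≤ k)
    (hab : a ≠ b) (ht : t ≤ k) :
    card (((range (k + 1)).map (movedRow a b)).filter (t < ·)) =
      movedRow (k + 1 - a) (k - b) (k - t) := by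
  rw [filter_map, card_map, ← Finset.range_val, ← Finset.filter_val, Finset.card_val]
  -- Compared with the staircase, row `a` stops exceeding `t` iff `t = a - 1`, and row `b`
  -- starts exceeding `t` iff `t = b`.
  have hpt : ∀ j, (if t < movedRow a b j then 1 else 0) +
        (if j = a then (if t = a - 1 then 1 else 0) else 0) =
      (if t < j then 1 else 0) + (if j = b then (if t = b then 1 else 0) else 0) := by
    intro j; unfold movedRow; split_ifs <;> omega
  have key := Finset.sum_congr (s₁ := Finset.range (k + 1)) rfl (fun j _ => hpt j)
  rw [Finset.sum_add_distrib, Finset.sum_add_distrib, Finset.sum_ite_eq', Finset.sum_ite_eq',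
    ← Finset.card_filter, ← Finset.card_filter] at key
  have hlt : ((Finset.range (k + 1)).filter (t < ·)).card = k - t := by
    rw [← Nat.card_Ioc]
    congr 1
    ext j
    simp only [Finset.mem_filter, Finset.mem_range, Finset.mem_Ioc]
    omega
  have hrhs : movedRow (k + 1 - a) (k - b) (k - t) + (if t = a - 1 then 1 else 0)
      = k - t + (if t = b then 1 else 0) := by
    unfold movedRow; split_ifs <;> omega
  simp only [Finset.mem_range, show a < k + 1 by omega, show b < k + 1 by omega, if_true, hlt]
    at key
  simp only [Function.comp_def]
  split_ifs at key hrhs <;> omega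

theorem conj_movedStaircase {k a b : ℕ} (ha : 1 ≤ a) (hak : a ≤ k) (hb : b ≤ k)
    (hab : a ≠ b) :
    conj (movedStaircase k a b) = movedStaircase k (k + 1 - a) (k - b) := by
  have hsup : (movedStaircase k a b).sup ≤ k + 1 := Multiset.sup_le.2 fun x hx => by
    obtain ⟨⟨j, hj, rfl⟩, -⟩ := mem_filter.1 hx |>.imp_left mem_map.1
    have := mem_range.1 hj
    unfold movedRow; split_ifs <;> omega
  rw [conj_eq_filter_pos_map_range hsup]
  conv_rhs => rw [movedStaircase, ← map_range_reflect (k + 1), map_map]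
  congr 1
  refine map_congr rfl fun t ht => ?_
  have hfilter : (movedStaircase k a b).filter (t < ·) =
      ((range (k + 1)).map (movedRow a b)).filter (t < ·) := by
    rw [movedStaircase, filter_filter]
    exact filter_congr fun x _ => by omega
  have ht' : t ≤ k := Nat.lt_succ_iff.1 (mem_range.1 ht)
  rw [Function.comp_apply, hfilter, card_filter_lt_map_movedRow ha hak hb hab ht',
    Nat.add_sub_cancel]

theorem bulg_movedStaircase {k a b : ℕ} (ha : 1 ≤ a) (hak : a ≤ k) (hb : b ≤ k)
    (hab : a ≠ b) :
    bulg (movedStaircase k a b) =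
      movedStaircase k (if a = 1 then k else a - 1) (if b = 0 then k else b - 1) := by
  have hcard : card (movedStaircase k a b) =
      movedRow (if a = 1 then k else a - 1) (if b = 0 then k else b - 1) k := by
    rw [movedStaircase, card_filter_lt_map_movedRow ha hak hb hab (Nat.zero_le k)]
    unfold movedRow; split_ifs <;> omega
  have hshift : (((range (k + 1)).map (movedRow a b)).map (· - 1)).filter (0 < ·) =
      ((range k).map (movedRow (if a = 1 then k else a - 1) (if b = 0 then k else b - 1))).filter
        (0 < ·) := by
    rw [range_succ_eq_cons_map, map_cons, map_cons,
      filter_cons_of_neg _ (by unfold movedRow; split_ifs <;> omega), map_map, map_map]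
    congr 1
    refine map_congr rfl fun j hj => ?_
    have := mem_range.1 hj
    simp only [Function.comp_apply]
    unfold movedRow; split_ifs <;> omega
  rw [movedStaircase, bulg_filter_pos, ← movedStaircase, hcard]
  conv_rhs => rw [movedStaircase, range_succ, map_cons]
  rw [filter_cons, filter_cons, hshift]

theorem tau_eq_movedStaircase {k : ℕ} (hk : 2 ≤ k) : tau k = movedStaircase k k 0 := by
  obtain ⟨m, rfl⟩ : ∃ m, k = m + 2 := ⟨k - 2, by omega⟩
  rw [movedStaircase, range_succ, range_succ_eq_cons_map, map_cons, map_cons, map_map]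
  have htop : movedRow (m + 2) 0 (m + 2) = m + 1 := by simp [movedRow]
  have hbot : movedRow (m + 2) 0 0 = 1 := by simp [movedRow]
  have hmid :
      map (movedRow (m + 2) 0 ∘ (· + 1)) (range (m + 1)) = map (· + 1) (range (m + 1)) :=
    map_congr rfl fun j hj => by simp [movedRow, (mem_range.1 hj).ne]
  rw [htop, hbot, hmid, filter_eq_self.2 (by simp)]
  rfl

-- `srcRow k i ≡ -i (mod k)` in `[1, k]` and `dstRow k i ≡ -i (mod k + 1)` in `[0, k]`.
def srcRow (k i : ℕ) : ℕ := k - i % k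

def dstRow (k i : ℕ) : ℕ := k - (i + k) % (k + 1)

theorem srcRow_pos {k : ℕ} (hk : 0 < k) (i : ℕ) : 0 < srcRow k i := by
  have := Nat.mod_lt i hk
  unfold srcRow; omega

theorem srcRow_le (k i : ℕ) : srcRow k i ≤ k := Nat.sub_le _ _

theorem dstRow_le (k i : ℕ) : dstRow k i ≤ k := Nat.sub_le _ _

theorem srcRow_zero (k : ℕ) : srcRow k 0 = k := by simp [srcRow]

theorem dstRow_zero (k : ℕ) : dstRow k 0 = 0 := by simp [dstRow]

theorem srcRow_succ {k : ℕ} (hk : 0 < k) (i : ℕ) :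
    srcRow k (i + 1) = if srcRow k i = 1 then k else srcRow k i - 1 := by
  have := Nat.mod_lt i hk
  unfold srcRow
  rw [Nat.add_one_mod_eq_ite hk]
  split_ifs <;> omega

theorem dstRow_succ (k i : ℕ) :
    dstRow k (i + 1) = if dstRow k i = 0 then k else dstRow k i - 1 := by
  have := Nat.mod_lt (i + k) (Nat.add_one_pos k)
  unfold dstRow
  rw [add_right_comm, Nat.add_one_mod_eq_ite (Nat.add_one_pos k)]
  split_ifs <;> omega

theorem dvd_srcRow_add {k : ℕ} (hk : 0 < k) (i : ℕ) : k ∣ srcRow k i + i := by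
  have := Nat.mod_add_div i k
  have := Nat.mod_lt i hk
  exact ⟨i / k + 1, by unfold srcRow; rw [mul_add, mul_one]; omega⟩

theorem dvd_dstRow_add (k i : ℕ) : k + 1 ∣ dstRow k i + i := by
  have := Nat.mod_add_div (i + k) (k + 1)
  have := Nat.mod_lt (i + k) (Nat.add_one_pos k)
  exact ⟨(i + k) / (k + 1), by unfold dstRow; omega⟩

theorem srcRow_ne_dstRow {k i : ℕ} (hk : 0 < k) (hi : i < k * k) : srcRow k i ≠ dstRow k i := by
  intro h
  have hdvd : k * (k + 1) ∣ srcRow k i + i :=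
    (Nat.coprime_self_add_right.2 (Nat.coprime_one_right k)).mul_dvd_of_dvd_of_dvd
      (dvd_srcRow_add hk i) (h ▸ dvd_dstRow_add k i)
  have := srcRow_pos hk i
  have := srcRow_le k i
  have := Nat.eq_zero_of_dvd_of_lt hdvd (by rw [mul_add, mul_one]; omega)
  omega

theorem srcRow_reflect {k i j : ℕ} (h : i + j + 1 = k * (k - 1)) :
    srcRow k j = k + 1 - srcRow k i := by
  have := Nat.mod_add_mod_add_one_of_dvd (h ▸ dvd_mul_right k (k - 1))
  unfold srcRow; omega

theorem dstRow_reflect {k i j : ℕ} (h : i + j + 1 = k * (k - 1)) :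
    dstRow k j = k - dstRow k i := by
  have hk : k * (k - 1) + 2 * k = (k + 1) * k := by
    cases k with
    | zero => rfl
    | succ k => rw [Nat.add_sub_cancel]; ring
  have := Nat.mod_add_mod_add_one_of_dvd (n := k + 1) (x := i + k) (y := j + k) ⟨k, by omega⟩
  unfold dstRow; omega

theorem bulg_iterate_tau {k i : ℕ} (hk : 2 ≤ k) (hi : i ≤ k * k) :
    bulg^[i] (tau k) = movedStaircase k (srcRow k i) (dstRow k i) := by
  induction i with
  | zero => rw [Function.iterate_zero_apply, srcRow_zero, dstRow_zero, tau_eq_movedStaircase hk]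
  | succ i ih =>
    have hk0 : 0 < k := by omega
    rw [Function.iterate_succ_apply', ih (by omega),
      bulg_movedStaircase (srcRow_pos hk0 i) (srcRow_le k i) (dstRow_le k i)
        (srcRow_ne_dstRow hk0 (by omega)), srcRow_succ hk0, dstRow_succ]

/-- Bentz: the partitions B^i(τ) and B^{k(k-1)-i-1}(τ) are conjugate for
0 ≤ i ≤ k(k-1) - 1. -/
theorem bentz_conjugate (k : ℕ) (hk : 2 ≤ k) (i : ℕ) (hi : i < k * (k - 1)) :
    bulg^[k * (k - 1) - i - 1] (tau k) = conj (bulg^[i] (tau k)) := by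
  have hij : i + (k * (k - 1) - i - 1) + 1 = k * (k - 1) := by omega
  have hkk : k * (k - 1) ≤ k * k := Nat.mul_le_mul_left k (Nat.sub_le k 1)
  rw [bulg_iterate_tau hk (by omega), bulg_iterate_tau hk (by omega),
    conj_movedStaircase (srcRow_pos (by omega) i) (srcRow_le k i) (dstRow_le k i)
      (srcRow_ne_dstRow (by omega) (by omega)), srcRow_reflect hij, dstRow_reflect hij]
end

section
/- Every partition of n lying on a cycle of the Bulgarian solitaire operator B (i.e., satisfying B^p(λ) = λ for some p ≥ 1) has largest part λ₁ ≥ s - 1, where s is its number of parts; equivalently, no Garden of Eden partition lies on a cycle. -/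
open Multiset

lemma card_bulg_le (m : Multiset ℕ) : card (bulg m) ≤ card m + 1 :=
  calc card (bulg m) ≤ card (card m ::ₘ m.map (· - 1)) := card_le_card (filter_le _ _)
    _ = card m + 1 := by simp

lemma card_le_sup_bulg {m : Multiset ℕ} (hm : 0 < card m) : card m ≤ (bulg m).sup :=
  le_sup (mem_filter.mpr ⟨mem_cons_self _ _, hm⟩)

lemma card_bulg_sub_one_le_sup (m : Multiset ℕ) : card (bulg m) - 1 ≤ (bulg m).sup := by
  have := card_bulg_le m
  rcases Nat.eq_zero_or_pos (card m) with hm | hm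
  · omega
  · have := card_le_sup_bulg hm
    omega

theorem cycle_not_gardenOfEden_general (l : Multiset ℕ)
    (hcyc : ∃ p : ℕ, 1 ≤ p ∧ bulg^[p] l = l) :
    Multiset.card l - 1 ≤ l.sup := by
  obtain ⟨m, rfl⟩ := Function.periodicPts_subset_range hcyc
  exact card_bulg_sub_one_le_sup m

/-- Every partition lying on a cycle of the Bulgarian solitaire has largest
part at least one less than its number of parts; equivalently, no Garden of
Eden partition lies on a cycle. -/
theorem cycle_not_gardenOfEden (n : ℕ) (l : Multiset ℕ) (hl : IsPartition n l)
    (hcyc : ∃ p : ℕ, 1 ≤ p ∧ bulg^[p] l = l) :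
    Multiset.card l - 1 ≤ l.sup :=
  cycle_not_gardenOfEden_general l hcyc
end
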